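/- On the 7-dimensional Lie algebra with structure equations de¹ = 2e^{36}, de² = 0, de³ = −e^{26}, de⁴ = −e^{26}+e^{25}, de⁵ = −e^{23}−e^{24}, de⁶ = e^{23}, de⁷ = 0 (the direct sum g_{6,38}⁰ ⊕ ℝ), the 3-form φ = e^{127}+e^{347}+e^{567}+e^{135}−e^{146}−e^{236}−e^{245} is closed. -/

import Mathlib

open Finset BigOperators

/-- Kronecker delta as a real number. -/
def kd {n : ℕ} (a i : Fin n) : ℝ := if a = i then 1 else 0

/-- The 2-form `e^a ∧ e^b` evaluated on basis vectors `e_i, e_j`. -/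
def pairF {n : ℕ} (a b i j : Fin n) : ℝ := kd a i * kd b j - kd a j * kd b i

/-- The 3-form `e^a ∧ e^b ∧ e^c` evaluated on basis vectors. -/
def tripF {n : ℕ} (a b c i j k : Fin n) : ℝ :=
  Matrix.det !![kd a i, kd a j, kd a k; kd b i, kd b j, kd b k; kd c i, kd c j, kd c k]

/-- The 4-form `e^a ∧ e^b ∧ e^c ∧ e^d` evaluated on basis vectors. -/
def quadF {n : ℕ} (a b c d i j k l : Fin n) : ℝ :=
  Matrix.det !![kd a i, kd a j, kd a k, kd a l;
                kd b i, kd b j, kd b k, kd b l;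
                kd c i, kd c j, kd c k, kd c l;
                kd d i, kd d j, kd d k, kd d l]

/-- Chevalley–Eilenberg differential of a 2-form, on basis vectors.
`br i a b` is the coefficient of `e_i` in `[e_a, e_b]`. -/
def d2 {n : ℕ} (br : Fin n → Fin n → Fin n → ℝ) (α : Fin n → Fin n → ℝ)
    (a b c : Fin n) : ℝ :=
  -(∑ m, br m a b * α m c) + (∑ m, br m a c * α m b) - (∑ m, br m b c * α m a)

/-- Chevalley–Eilenberg differential of a 3-form, on basis vectors. -/
def d3 {n : ℕ} (br : Fin n → Fin n → Fin n → ℝ) (α : Fin n → Fin n → Fin n → ℝ)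
    (a b c d : Fin n) : ℝ :=
  -(∑ m, br m a b * α m c d) + (∑ m, br m a c * α m b d) - (∑ m, br m a d * α m b c)
  - (∑ m, br m b c * α m a d) + (∑ m, br m b d * α m a c) - (∑ m, br m c d * α m a b)

/-- Chevalley–Eilenberg differential of a 4-form, on basis vectors. -/
def d4 {n : ℕ} (br : Fin n → Fin n → Fin n → ℝ)
    (α : Fin n → Fin n → Fin n → Fin n → ℝ) (a b c d e : Fin n) : ℝ :=
  -(∑ m, br m a b * α m c d e) + (∑ m, br m a c * α m b d e) - (∑ m, br m a d * α m b c e)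
  + (∑ m, br m a e * α m b c d) - (∑ m, br m b c * α m a d e) + (∑ m, br m b d * α m a c e)
  - (∑ m, br m b e * α m a c d) - (∑ m, br m c d * α m a b e) + (∑ m, br m c e * α m a b d)
  - (∑ m, br m d e * α m a b c)

/-- Wedge product of two 2-forms, evaluated on basis vectors. -/
def w22 {n : ℕ} (α β : Fin n → Fin n → ℝ) (i j k l : Fin n) : ℝ :=
  α i j * β k l - α i k * β j l + α i l * β j k
  + α j k * β i l - α j l * β i k + α k l * β i j

/-- Wedge product of a 2-form and a 1-form, evaluated on basis vectors. -/
def w21 {n : ℕ} (α : Fin n → Fin n → ℝ) (β : Fin n → ℝ) (i j k : Fin n) : ℝ :=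
  α i j * β k - α i k * β j + α j k * β i

/-- Wedge product of a 3-form and a 1-form, evaluated on basis vectors. -/
def w31 {n : ℕ} (α : Fin n → Fin n → Fin n → ℝ) (β : Fin n → ℝ) (i j k l : Fin n) : ℝ :=
  α i j k * β l - α i j l * β k + α i k l * β j - α j k l * β i

/-- `ω = e^{12} + e^{34} + e^{56}` (0-indexed). -/
def omega6 : Fin 6 → Fin 6 → ℝ := fun i j => pairF 0 1 i j + pairF 2 3 i j + pairF 4 5 i j

/-- `ψ₊ = e^{135} − e^{146} − e^{236} − e^{245}` (0-indexed). -/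
def psi6 : Fin 6 → Fin 6 → Fin 6 → ℝ := fun i j k =>
  tripF 0 2 4 i j k - tripF 0 3 5 i j k - tripF 1 2 5 i j k - tripF 1 3 4 i j k

/-- `ω` viewed on a 7-dimensional space (indices 0..5). -/
def omega7 : Fin 7 → Fin 7 → ℝ := fun i j => pairF 0 1 i j + pairF 2 3 i j + pairF 4 5 i j

/-- `ψ₊` viewed on a 7-dimensional space. -/
def psi7 : Fin 7 → Fin 7 → Fin 7 → ℝ := fun i j k =>
  tripF 0 2 4 i j k - tripF 0 3 5 i j k - tripF 1 2 5 i j k - tripF 1 3 4 i j k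

/-- `η = e^7`, the 1-form dual to the extra direction. -/
def eta7 : Fin 7 → ℝ := kd 6

/-- The real 6×6 representation of a complex 3×3 matrix: each entry `a+bi`
becomes the 2×2 block `[[a, b], [−b, a]]`. -/
def realRep (A : Matrix (Fin 3) (Fin 3) ℂ) : Matrix (Fin 6) (Fin 6) ℝ :=
  Matrix.of fun i j =>
    let p : Fin 3 := ⟨(i : ℕ) / 2, by have := i.isLt; omega⟩
    let q : Fin 3 := ⟨(j : ℕ) / 2, by have := j.isLt; omega⟩
    if (i : ℕ) % 2 = 0 then
      (if (j : ℕ) % 2 = 0 then (A p q).re else (A p q).im)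
    else
      (if (j : ℕ) % 2 = 0 then -(A p q).im else (A p q).re)

/-- Structure constants of the semidirect sum `g = h ⊕_D ℝξ`, where `f` are the
structure constants of `h` ( `f i a b` = coefficient of `e_i` in `[e_a,e_b]` ),
`ξ = e₇` and `[ξ, U] = D U`. -/
def brg (f : Fin 6 → Fin 6 → Fin 6 → ℝ) (D : Matrix (Fin 6) (Fin 6) ℝ) :
    Fin 7 → Fin 7 → Fin 7 → ℝ := fun i a b =>
  if hi : (i : ℕ) < 6 then
    if ha : (a : ℕ) < 6 then
      if hb : (b : ℕ) < 6 then f ⟨i, hi⟩ ⟨a, ha⟩ ⟨b, hb⟩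
      else -(D ⟨i, hi⟩ ⟨a, ha⟩)
    else
      if hb : (b : ℕ) < 6 then D ⟨i, hi⟩ ⟨b, hb⟩ else 0
  else 0

/-- Structure constants of `g_{6,38}⁰ ⊕ ℝ =
`(2e^{36}, 0, −e^{26}, −e^{26}+e^{25}, −e^{23}−e^{24}, e^{23}, 0)`. -/
def bb14 : Fin 7 → Fin 7 → Fin 7 → ℝ := fun i a b =>
  if i = 0 ∧ a = 2 ∧ b = 5 then -2
  else if i = 2 ∧ a = 1 ∧ b = 5 then 1
  else if i = 3 ∧ a = 1 ∧ b = 5 then 1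
  else if i = 3 ∧ a = 1 ∧ b = 4 then -1
  else if i = 4 ∧ a = 1 ∧ b = 2 then 1
  else if i = 4 ∧ a = 1 ∧ b = 3 then 1
  else if i = 5 ∧ a = 1 ∧ b = 2 then -1
  else 0

def br14 : Fin 7 → Fin 7 → Fin 7 → ℝ := fun i a b => bb14 i a b - bb14 i b a

def phi14 : Fin 7 → Fin 7 → Fin 7 → ℝ := fun i j k =>
  tripF 0 1 6 i j k + tripF 2 3 6 i j k + tripF 4 5 6 i j k + psi7 i j k

/-! Every coefficient involved is an integer, so `dφ = 0` reduces to a finite computation in `ℤ`,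
which the kernel can carry out by `decide`. -/

section IntegerCoefficients

variable {n : ℕ}

def kdInt (a i : Fin n) : ℤ := if a = i then 1 else 0

-- The determinant of `tripF` expanded along its first row: `Matrix.det` does not reduce well
-- under `decide`.
def tripFInt (a b c i j k : Fin n) : ℤ :=
  kdInt a i * (kdInt b j * kdInt c k - kdInt b k * kdInt c j)
  - kdInt a j * (kdInt b i * kdInt c k - kdInt b k * kdInt c i)
  + kdInt a k * (kdInt b i * kdInt c j - kdInt b j * kdInt c i)

def d3Int (br : Fin n → Fin n → Fin n → ℤ) (α : Fin n → Fin n → Fin n → ℤ)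
    (a b c d : Fin n) : ℤ :=
  -(∑ m, br m a b * α m c d) + (∑ m, br m a c * α m b d) - (∑ m, br m a d * α m b c)
  - (∑ m, br m b c * α m a d) + (∑ m, br m b d * α m a c) - (∑ m, br m c d * α m a b)

theorem kd_eq_intCast (a i : Fin n) : kd a i = kdInt a i := by
  unfold kd kdInt
  split_ifs <;> norm_num

theorem tripF_eq_intCast (a b c i j k : Fin n) : tripF a b c i j k = tripFInt a b c i j k := by
  simp [tripF, Matrix.det_fin_three, tripFInt, kd_eq_intCast]
  ring

theorem d3_intCast (br : Fin n → Fin n → Fin n → ℤ) (α : Fin n → Fin n → Fin n → ℤ)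
    (a b c d : Fin n) :
    d3 (fun i a b => (br i a b : ℝ)) (fun i j k => (α i j k : ℝ)) a b c d = d3Int br α a b c d := by
  simp only [d3, d3Int]
  push_cast
  rfl

end IntegerCoefficients

def bb14Int : Fin 7 → Fin 7 → Fin 7 → ℤ := fun i a b =>
  if i = 0 ∧ a = 2 ∧ b = 5 then -2
  else if i = 2 ∧ a = 1 ∧ b = 5 then 1
  else if i = 3 ∧ a = 1 ∧ b = 5 then 1
  else if i = 3 ∧ a = 1 ∧ b = 4 then -1
  else if i = 4 ∧ a = 1 ∧ b = 2 then 1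
  else if i = 4 ∧ a = 1 ∧ b = 3 then 1
  else if i = 5 ∧ a = 1 ∧ b = 2 then -1
  else 0

def br14Int : Fin 7 → Fin 7 → Fin 7 → ℤ := fun i a b => bb14Int i a b - bb14Int i b a

def phi14Int : Fin 7 → Fin 7 → Fin 7 → ℤ := fun i j k =>
  tripFInt 0 1 6 i j k + tripFInt 2 3 6 i j k + tripFInt 4 5 6 i j k
  + (tripFInt 0 2 4 i j k - tripFInt 0 3 5 i j k - tripFInt 1 2 5 i j k - tripFInt 1 3 4 i j k)

theorem bb14_eq_intCast (i a b : Fin 7) : bb14 i a b = bb14Int i a b := by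
  simp only [bb14, bb14Int, apply_ite (Int.cast : ℤ → ℝ)]
  norm_num

theorem br14_eq_intCast : br14 = fun i a b => (br14Int i a b : ℝ) := by
  funext i a b
  simp only [br14, br14Int, bb14_eq_intCast, Int.cast_sub]

theorem phi14_eq_intCast : phi14 = fun i j k => (phi14Int i j k : ℝ) := by
  funext i j k
  simp only [phi14, psi7, phi14Int, tripF_eq_intCast]
  push_cast
  ring

theorem d3Int_br14Int_phi14Int : ∀ a b c d : Fin 7, d3Int br14Int phi14Int a b c d = 0 := by
  decide

theorem stmt_14 : ∀ a b c d : Fin 7, d3 br14 phi14 a b c d = 0 := by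
  intro a b c d
  rw [br14_eq_intCast, phi14_eq_intCast, d3_intCast, d3Int_br14Int_phi14Int, Int.cast_zero]
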